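/- arXiv:2603.00970 — 2 statements merged into one kernel-verified Lean document; each statement's English description precedes it below -/
import Mathlib

section
/- Let R be a commutative ring and let E be a GV-torsion-free injective R-module (i.e., a w-injective w-module). For each ideal A of R set A* = {q ∈ E : Aq = 0} and A** = {r ∈ R : rA* = 0}. Then the following are equivalent: (1) E is w-faithfully injective, i.e., Hom_R(B, E) ≠ 0 for every nonzero GV-torsion-free R-module B; (2) I = I** for every proper w-ideal I of R; (3) m = m** for every m ∈ w-Max(R). -/
/-!
For `0 ≠ b ∈ B` with `B` GV-torsion-free, the annihilator of `b` is a proper w-ideal, hence lies in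
some `m ∈ w-Max(R)`; if `m = m**` then `m* ≠ 0`, and any `0 ≠ q ∈ m*` is the image of `b` under a
map `B → E` by injectivity of `E`. Conversely, if `r ∉ I` for a w-ideal `I`, then `R/I` is
GV-torsion-free, so some map `f : R/I → E` does not kill `r + I`, and `q = f(1 + I)` is an element
of `I*` with `rq ≠ 0`.
-/

universe u v

section WDefs

variable (R : Type u) [CommRing R]

/-- The canonical `R`-linear map `R → Hom_R(J, R)`, `r ↦ (j ↦ r * j)`. -/
def gvCanonicalMap (J : Ideal R) : R →ₗ[R] (J →ₗ[R] R) where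
  toFun r := r • (J.subtype)
  map_add' x y := add_smul x y _
  map_smul' r x := by simp [mul_smul]

/-- A finitely generated ideal `J` of `R` is a GV-ideal (Glaz–Vasconcelos ideal)
if the canonical map `R → Hom_R(J, R)` is an isomorphism. -/
def IsGVIdeal (J : Ideal R) : Prop :=
  J.FG ∧ Function.Bijective (gvCanonicalMap R J)

/-- An ideal `I` of `R` is a w-ideal if whenever `J x ⊆ I` for some GV-ideal `J`,
then `x ∈ I`. -/
def IsWIdeal (I : Ideal R) : Prop :=
  ∀ x : R, (∃ J : Ideal R, IsGVIdeal R J ∧ ∀ j ∈ J, j * x ∈ I) → x ∈ I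

/-- `m` is a maximal w-ideal: maximal among the proper w-ideals of `R`. -/
def IsMaxWIdeal (m : Ideal R) : Prop :=
  IsWIdeal R m ∧ m ≠ ⊤ ∧ ∀ I : Ideal R, IsWIdeal R I → I ≠ ⊤ → m ≤ I → I = m

variable {M : Type v} [AddCommGroup M] [Module R M]

/-- `x` is a GV-torsion element if it is killed by some GV-ideal. -/
def IsGVTorsionElem (x : M) : Prop :=
  ∃ J : Ideal R, IsGVIdeal R J ∧ ∀ j ∈ J, j • x = 0

variable (M)

/-- `M` is GV-torsion-free if it has no nonzero GV-torsion element. -/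
def IsGVTorsionFree : Prop := ∀ x : M, IsGVTorsionElem R x → x = 0

/-- `M` is GV-torsion if all its elements are GV-torsion. -/
def IsGVTorsion : Prop := ∀ x : M, IsGVTorsionElem R x

/-- `M` is a w-module: GV-torsion-free and every map from a GV-ideal to `M`
extends to `R`. -/
def IsWModule : Prop :=
  IsGVTorsionFree R M ∧
    ∀ J : Ideal R, IsGVIdeal R J → ∀ f : J →ₗ[R] M,
      ∃ g : R →ₗ[R] M, ∀ x : J, g (x : R) = f x

end WDefs

universe w

section WIdeals

variable {R : Type u} [CommRing R]

lemma isWIdeal_sSup_of_directedOn {c : Set (Ideal R)} (hne : c.Nonempty)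
    (hdir : DirectedOn (· ≤ ·) c) (hc : ∀ I ∈ c, IsWIdeal R I) : IsWIdeal R (sSup c) := by
  rintro x ⟨J, hJ, hJx⟩
  -- `J x` is finitely generated, hence compact, so it already lies in a member of the chain
  have hcompact : IsCompactElement (Submodule.map (LinearMap.mulRight R x) J) :=
    (Submodule.fg_iff_compact _).1 (Submodule.FG.map _ hJ.1)
  obtain ⟨I, hI, hJxI⟩ :=
    (CompleteLattice.isCompactElement_iff_le_of_directed_sSup_le _ _).1 hcompact c hne hdir
      (Submodule.map_le_iff_le_comap.2 hJx)
  exact le_sSup hI (hc I hI x ⟨J, hJ, Submodule.map_le_iff_le_comap.1 hJxI⟩)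

lemma IsWIdeal.exists_le_isMaxWIdeal {I : Ideal R} (hI : IsWIdeal R I) (hI_ne : I ≠ ⊤) :
    ∃ m, IsMaxWIdeal R m ∧ I ≤ m := by
  obtain ⟨m, hIm, ⟨hmw, hm_ne⟩, hmax⟩ :=
    zorn_le_nonempty₀ {J : Ideal R | IsWIdeal R J ∧ J ≠ ⊤} (fun c hc hchain J hJ ↦
      ⟨sSup c,
        ⟨isWIdeal_sSup_of_directedOn ⟨J, hJ⟩ hchain.directedOn fun K hK ↦ (hc hK).1,
          (CompleteLattice.IsCompactElement.directed_sSup_lt_of_lt Ideal.isCompactElement_top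
            ⟨J, hJ⟩ hchain.directedOn fun K hK ↦ lt_top_iff_ne_top.2 (hc hK).2).ne⟩,
        fun _ ↦ le_sSup⟩) I ⟨hI, hI_ne⟩
  exact ⟨m, ⟨hmw, hm_ne, fun J hJ hJ_ne hmJ ↦ le_antisymm (hmax ⟨hJ, hJ_ne⟩ hmJ) hmJ⟩, hIm⟩

end WIdeals

section GVTorsionFree

variable {R : Type u} [CommRing R]
variable {M : Type v} [AddCommGroup M] [Module R M]

lemma IsGVTorsionFree.submodule (hM : IsGVTorsionFree R M) (N : Submodule R M) :
    IsGVTorsionFree R N := by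
  rintro x ⟨J, hJ, hJx⟩
  exact Subtype.ext <| hM x ⟨J, hJ, fun j hj ↦ congrArg Subtype.val (hJx j hj)⟩

lemma IsGVTorsionFree.isWIdeal_torsionOf (hM : IsGVTorsionFree R M) (x : M) :
    IsWIdeal R (Ideal.torsionOf R M x) := by
  rintro r ⟨J, hJ, hJr⟩
  refine hM (r • x) ⟨J, hJ, fun j hj ↦ ?_⟩
  rw [smul_smul]
  exact hJr j hj

lemma IsWIdeal.isGVTorsionFree_quotient {I : Ideal R} (hI : IsWIdeal R I) :
    IsGVTorsionFree R (R ⧸ I) := by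
  rintro x ⟨J, hJ, hJx⟩
  obtain ⟨r, rfl⟩ := Ideal.Quotient.mk_surjective x
  refine Ideal.Quotient.eq_zero_iff_mem.2 (hI r ⟨J, hJ, fun j hj ↦ ?_⟩)
  rw [← Ideal.Quotient.eq_zero_iff_mem, map_mul]
  exact hJx j hj

end GVTorsionFree

def IsWFaithfullyInjective (R : Type u) [CommRing R] (E : Type v) [AddCommGroup E] [Module R E] :
    Prop :=
  ∀ (B : Type v) [AddCommGroup B] [Module R B], IsGVTorsionFree R B → Nontrivial B →
    ∃ f : B →ₗ[R] E, f ≠ 0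

section Injective

variable {R : Type u} [CommRing R]
variable {M : Type w} [AddCommGroup M] [Module R M]
variable {E : Type v} [AddCommGroup E] [Module R E] [Small.{v} R] [Module.Injective R E]

lemma exists_linearMap_apply_eq_of_smul_eq_zero {b : M} {q : E}
    (h : ∀ a : R, a • b = 0 → a • q = 0) : ∃ f : M →ₗ[R] E, f b = q := by
  let K := (LinearMap.toSpanSingleton R M b).ker
  have hK : K ≤ (LinearMap.toSpanSingleton R E q).ker := h
  have hinj : Function.Injective (K.liftQ (LinearMap.toSpanSingleton R M b) le_rfl) :=
    LinearMap.ker_eq_bot.1 (Submodule.ker_liftQ_eq_bot _ _ _ le_rfl)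
  obtain ⟨f, hf⟩ := Module.Injective.extension_property R E _ _ _ hinj
    (K.liftQ (LinearMap.toSpanSingleton R E q) hK)
  have := LinearMap.congr_fun hf (Submodule.Quotient.mk 1)
  rw [LinearMap.comp_apply, Submodule.liftQ_apply, Submodule.liftQ_apply] at this
  exact ⟨f, by simpa using this⟩

lemma IsWFaithfullyInjective.exists_apply_ne_zero {M : Type v} [AddCommGroup M] [Module R M]
    (hE : IsWFaithfullyInjective R E) (hM : IsGVTorsionFree R M) {b : M} (hb : b ≠ 0) :
    ∃ f : M →ₗ[R] E, f b ≠ 0 := by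
  have : Nontrivial (R ∙ b) := Submodule.nontrivial_span_singleton hb
  obtain ⟨g, hg⟩ := hE (R ∙ b) (hM.submodule _) this
  obtain ⟨f, hf⟩ :=
    Module.Injective.extension_property R E _ _ _ (R ∙ b).injective_subtype g
  refine ⟨f, fun hfb ↦ hg (LinearMap.ext fun ⟨x, hx⟩ ↦ ?_)⟩
  obtain ⟨r, rfl⟩ := Submodule.mem_span_singleton.1 hx
  rw [← LinearMap.congr_fun hf]
  simp [hfb]

lemma isWFaithfullyInjective_of_forall_isMaxWIdeal
    (h : ∀ m, IsMaxWIdeal R m → ∃ q : E, (∀ a ∈ m, a • q = 0) ∧ q ≠ 0) :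
    IsWFaithfullyInjective R E := by
  intro B _ _ hB _
  obtain ⟨b, hb⟩ := exists_ne (0 : B)
  obtain ⟨m, hm, hbm⟩ := (hB.isWIdeal_torsionOf b).exists_le_isMaxWIdeal
    ((Ideal.torsionOf_eq_top_iff R b).not.2 hb)
  obtain ⟨q, hqm, hq⟩ := h m hm
  obtain ⟨f, rfl⟩ := exists_linearMap_apply_eq_of_smul_eq_zero fun a ha ↦ hqm a (hbm ha)
  exact ⟨f, fun hf ↦ hq (by simp [hf])⟩

end Injective

section Bidual

variable {R : Type u} [CommRing R]
variable {E : Type u} [AddCommGroup E] [Module R E] [Module.Injective R E]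

lemma IsWFaithfullyInjective.mem_of_forall_smul_eq_zero (hE : IsWFaithfullyInjective R E)
    {I : Ideal R} (hI : IsWIdeal R I) {r : R}
    (hr : ∀ q : E, (∀ a ∈ I, a • q = 0) → r • q = 0) : r ∈ I := by
  by_contra hrI
  obtain ⟨f, hf⟩ := hE.exists_apply_ne_zero hI.isGVTorsionFree_quotient
    (Ideal.Quotient.eq_zero_iff_mem.not.2 hrI : Ideal.Quotient.mk I r ≠ 0)
  have hmk : ∀ s : R, s • f (Ideal.Quotient.mk I 1) = f (Ideal.Quotient.mk I s) := fun s ↦ by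
    rw [← map_smul, Algebra.smul_def, Ideal.Quotient.algebraMap_eq, ← map_mul, mul_one]
  refine hf ?_
  rw [← hmk]
  exact hr _ fun a ha ↦ by rw [hmk, Ideal.Quotient.eq_zero_iff_mem.2 ha, map_zero]

end Bidual

theorem wFaithfullyInjective_tfae_bidual_general (R : Type u) [CommRing R] (E : Type u)
    [AddCommGroup E] [Module R E]
    (hinj : Module.Injective R E) :
    List.TFAE [
      ∀ (B : Type u) [AddCommGroup B] [Module R B], IsGVTorsionFree R B → Nontrivial B →
        ∃ f : B →ₗ[R] E, f ≠ 0,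
      ∀ I : Ideal R, IsWIdeal R I → I ≠ ⊤ →
        ∀ r : R, r ∈ I ↔ ∀ q : E, (∀ a ∈ I, a • q = 0) → r • q = 0,
      ∀ m : Ideal R, IsMaxWIdeal R m →
        ∀ r : R, r ∈ m ↔ ∀ q : E, (∀ a ∈ m, a • q = 0) → r • q = 0 ] := by
  tfae_have 1 → 2 := fun hE I hI _ r ↦
    ⟨fun hr _ hq ↦ hq r hr, IsWFaithfullyInjective.mem_of_forall_smul_eq_zero hE hI⟩
  tfae_have 2 → 3 := fun h m hm ↦ h m hm.1 hm.2.1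
  tfae_have 3 → 1 := by
    refine fun h ↦ isWFaithfullyInjective_of_forall_isMaxWIdeal fun m hm ↦ ?_
    -- `1 ∉ m = m**`, so some `q ∈ m*` is not killed by `1`
    by_contra! hm_ann
    exact hm.2.1 (m.eq_top_iff_one.2 ((h m hm 1).2 fun q hq ↦ by rw [one_smul, hm_ann q hq]))
  tfae_finish

/-- w-analogue of Ishikawa's Theorem 4.1: for a GV-torsion-free
injective `R`-module `E`, writing `A* = {q ∈ E : Aq = 0}` and
`A** = {r ∈ R : r A* = 0}`, TFAE:
(1) `E` is w-faithfully injective;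
(2) `I = I**` for every proper w-ideal `I`;
(3) `m = m**` for every maximal w-ideal `m`. -/
theorem wFaithfullyInjective_tfae_bidual (R : Type u) [CommRing R] (E : Type u)
    [AddCommGroup E] [Module R E] (htf : IsGVTorsionFree R E)
    (hinj : Module.Injective R E) :
    List.TFAE [
      ∀ (B : Type u) [AddCommGroup B] [Module R B], IsGVTorsionFree R B → Nontrivial B →
        ∃ f : B →ₗ[R] E, f ≠ 0,
      ∀ I : Ideal R, IsWIdeal R I → I ≠ ⊤ →
        ∀ r : R, r ∈ I ↔ ∀ q : E, (∀ a ∈ I, a • q = 0) → r • q = 0,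
      ∀ m : Ideal R, IsMaxWIdeal R m →
        ∀ r : R, r ∈ m ↔ ∀ q : E, (∀ a ∈ m, a • q = 0) → r • q = 0 ] :=
  wFaithfullyInjective_tfae_bidual_general R E hinj
end

section
/- Let R be an integral domain with quotient field Q. (a) If m ∈ w-Max(R) and the localization R_m is a discrete valuation ring, then the R_m-module Q/R_m is faithfully injective, and for every nonzero ideal I of R the Matlis evaluation map θ : R_m/I_m → Hom_{R_m}(Hom_{R_m}(R_m/I_m, Q/R_m), Q/R_m), a ↦ (φ ↦ φ(a)), is injective. (b) If R_m is a discrete valuation ring for every m ∈ w-Max(R), then E^(w) := ∏_{m ∈ w-Max(R)} (Q/R_m) is a w-universal injective R-module, i.e., E^(w) is an injective R-module and Hom_R(A, E^(w)) ≠ 0 for every nonzero GV-torsion-free R-module A. -/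
universe u v

/-- The image of `R_m` in the quotient field, as an `R_m`-submodule of `Frac(R)`. -/
noncomputable abbrev locImageSubmodule (R : Type u) [CommRing R] [IsDomain R]
    (m : Ideal R) [hp : m.IsPrime] :
    Submodule (Localization.AtPrime m) (FractionRing R) :=
  LinearMap.range (Algebra.linearMap (Localization.AtPrime m) (FractionRing R))

/-- `Q/R_m` viewed as an `R`-module (for forming the product `E^(w)`). -/
noncomputable abbrev QmodLocR (R : Type u) [CommRing R] [IsDomain R]
    (m : Ideal R) (hp : m.IsPrime) : Type u :=
  letI := hp
  (FractionRing R) ⧸ ((locImageSubmodule R m).restrictScalars R)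

/-- The set of maximal w-ideals (each of which is prime). -/
def WMaxPrimes (R : Type u) [CommRing R] : Type u :=
  {m : Ideal R // IsMaxWIdeal R m ∧ m.IsPrime}

/-!
Over the DVR `R_m`, `Q/R_m` is divisible, hence injective, and its socle is spanned by the class
of `ϖ⁻¹`; so any nonzero `x` whose annihilator lies in the maximal ideal is detected by a map to
`Q/R_m` sending `x` to that class. Since `R_m` is a localization of `R`, `Q/R_m` is also an
injective `R`-module. If `A` is GV-torsion-free, the annihilator of `x ≠ 0` is a proper w-ideal,
hence lies in some maximal w-ideal `m` (Zorn, using that GV-ideals are finitely generated), and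
`A → Q/R_m ⊆ E^(w)` detects `x`.
-/

section WIdeals

variable {R : Type u} [CommRing R]

theorem IsWIdeal.sSup_of_directedOn {c : Set (Ideal R)} (hne : c.Nonempty)
    (hdir : DirectedOn (· ≤ ·) c) (hw : ∀ I ∈ c, IsWIdeal R I) : IsWIdeal R (sSup c) := by
  rintro z ⟨J, hJ, hJz⟩
  have hle : J * Ideal.span {z} ≤ sSup c :=
    Submodule.mul_le.2 fun j hj y hy => by
      obtain ⟨t, rfl⟩ := Ideal.mem_span_singleton'.1 hy
      simpa [mul_left_comm] using Ideal.mul_mem_left _ t (hJz j hj)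
  -- `J z` is finitely generated, hence a compact element of the lattice of ideals.
  obtain ⟨I, hIc, hJI⟩ :=
    (CompleteLattice.isCompactElement_iff_le_of_directed_sSup_le _ _).1
      ((Submodule.fg_iff_compact _).1 (hJ.1.mul (Submodule.fg_span_singleton z))) c hne hdir hle
  exact le_sSup hIc <| hw I hIc z
    ⟨J, hJ, fun j hj => hJI (Submodule.mul_mem_mul hj (Ideal.mem_span_singleton_self z))⟩

theorem exists_isMaxWIdeal_le {K : Ideal R} (hK : IsWIdeal R K) (hKtop : K ≠ ⊤) :
    ∃ m, IsMaxWIdeal R m ∧ K ≤ m := by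
  obtain ⟨m, hKm, hm⟩ := zorn_le_nonempty₀ {I : Ideal R | IsWIdeal R I ∧ I ≠ ⊤}
    (fun c hcs hchain I hI => by
      have hdir := hchain.directedOn
      refine ⟨sSup c, ⟨.sSup_of_directedOn ⟨I, hI⟩ hdir fun J hJ => (hcs hJ).1, ?_⟩,
        fun J hJ => le_sSup hJ⟩
      rw [Ne, Ideal.eq_top_iff_one, Submodule.mem_sSup_of_directed ⟨I, hI⟩ hdir]
      rintro ⟨J, hJc, hJ1⟩
      exact (hcs hJc).2 ((Ideal.eq_top_iff_one J).2 hJ1))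
    K ⟨hK, hKtop⟩
  exact ⟨m, ⟨hm.prop.1, hm.prop.2, fun I hIw hItop hmI =>
    le_antisymm (hm.2 ⟨hIw, hItop⟩ hmI) hmI⟩, hKm⟩

theorem IsWIdeal.colon_singleton {I : Ideal R} (hI : IsWIdeal R I) (b : R) :
    IsWIdeal R (I.colon {b}) := by
  rintro z ⟨J, hJ, hJz⟩
  simp only [Submodule.mem_colon_singleton, smul_eq_mul] at hJz ⊢
  exact hI _ ⟨J, hJ, fun j hj => mul_assoc j z b ▸ hJz j hj⟩

theorem IsMaxWIdeal.isPrime {m : Ideal R} (hm : IsMaxWIdeal R m) : m.IsPrime := by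
  refine ⟨hm.2.1, fun {a b} hab => or_iff_not_imp_right.2 fun hb => ?_⟩
  have hcolon_top : m.colon {b} ≠ ⊤ := (Ideal.ne_top_iff_one _).2 fun h =>
    hb (by simpa using Submodule.mem_colon_singleton.1 h)
  have hle : m ≤ m.colon {b} := fun r hr => Submodule.mem_colon_singleton.2 (m.mul_mem_right b hr)
  rw [← hm.2.2 _ (hm.1.colon_singleton b) hcolon_top hle]
  exact Submodule.mem_colon_singleton.2 hab

theorem IsGVTorsionFree.isWIdeal_ker_toSpanSingleton {A : Type v} [AddCommGroup A] [Module R A]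
    (hA : IsGVTorsionFree R A) (x : A) :
    IsWIdeal R (LinearMap.ker (LinearMap.toSpanSingleton R A x)) := by
  rintro z ⟨J, hJ, hJz⟩
  simp only [LinearMap.mem_ker, LinearMap.toSpanSingleton_apply, ← smul_smul] at hJz ⊢
  exact hA _ ⟨J, hJ, hJz⟩

end WIdeals

section Baer

variable {R : Type*} [CommRing R] {E : Type*} [AddCommGroup E] [Module R E]

theorem Module.Baer.of_smul_surjective [IsDomain R] [IsPrincipalIdealRing R]
    (hdiv : ∀ c : R, c ≠ 0 → Function.Surjective (c • · : E → E)) : Module.Baer R E := by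
  intro I g
  obtain ⟨c, rfl⟩ := (IsPrincipalIdealRing.principal I).principal
  have hc : c ∈ Ideal.span {c} := Ideal.mem_span_singleton_self c
  by_cases hc0 : c = 0
  · subst hc0
    refine ⟨0, fun x hx => ?_⟩
    obtain rfl : x = 0 := by simpa using hx
    simp only [LinearMap.zero_apply]
    exact (map_zero g).symm
  obtain ⟨z, hz⟩ := hdiv c hc0 (g ⟨c, hc⟩)
  refine ⟨LinearMap.toSpanSingleton R E z, fun x hx => ?_⟩
  obtain ⟨t, rfl⟩ := Ideal.mem_span_singleton'.1 hx
  have : (⟨t * c, hx⟩ : Ideal.span {c}) = t • ⟨c, hc⟩ := rfl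
  rw [this, map_smul, ← hz, LinearMap.toSpanSingleton_apply, mul_smul]

/-- Baer's criterion descends along a localization `R → A`: a map `I → E` from an ideal of `R`
extends `A`-linearly to the localized ideal `I A`, because `E` is an `A`-module. -/
theorem Module.Baer.of_isLocalization (S : Submonoid R) (A : Type*) [CommRing A] [Algebra R A]
    [IsLocalization S A] [Module A E] [IsScalarTower R A E] (h : Module.Baer A E) :
    Module.Baer R E := by
  intro I g
  have := isLocalizedModule_id S E A
  set ι := I.toLocalized' A S (Algebra.linearMap R A)
  have hunits := IsLocalizedModule.map_units (S := S) (LinearMap.id : E →ₗ[R] E)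
  obtain ⟨G, hG⟩ :=
    h _ ((IsLocalizedModule.lift S ι g hunits).extendScalarsOfIsLocalization S A)
  refine ⟨G.restrictScalars R ∘ₗ Algebra.linearMap R A, fun x hx => ?_⟩
  exact (hG _ (ι ⟨x, hx⟩).2).trans (IsLocalizedModule.lift_apply S ι g hunits ⟨x, hx⟩)

end Baer

section Separation

variable {R : Type u} [CommRing R] {E : Type v} [AddCommGroup E] [Module R E] [Small.{v} R]
  [Module.Injective R E] {N : Type*} [AddCommGroup N] [Module R N]

theorem Module.Injective.exists_linearMap_apply_eq {x : N} {e : E}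
    (hann : ∀ r : R, r • x = 0 → r • e = 0) : ∃ φ : N →ₗ[R] E, φ x = e := by
  let f := LinearMap.toSpanSingleton R N x
  have hker : LinearMap.ker f ≤ LinearMap.ker (LinearMap.toSpanSingleton R E e) := hann
  -- Extend `R ⧸ ann x → E, 1 ↦ e` along `R ⧸ ann x ≅ R x ⊆ N`.
  have hinj : Function.Injective ((LinearMap.ker f).liftQ f le_rfl) :=
    LinearMap.ker_eq_bot.1 (Submodule.ker_liftQ_eq_bot' _ f rfl)
  obtain ⟨φ, hφ⟩ :=
    Module.Injective.extension_property R E _ _ _ hinj ((LinearMap.ker f).liftQ _ hker)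
  refine ⟨φ, ?_⟩
  have h1 := LinearMap.congr_fun hφ (Submodule.Quotient.mk 1)
  rwa [LinearMap.comp_apply, Submodule.liftQ_apply, Submodule.liftQ_apply,
    LinearMap.toSpanSingleton_apply, LinearMap.toSpanSingleton_apply, one_smul, one_smul] at h1

theorem IsLocalRing.exists_linearMap_apply_ne_zero [IsLocalRing R] {e : E} (he : e ≠ 0)
    (hann : ∀ r ∈ IsLocalRing.maximalIdeal R, r • e = 0) {x : N} (hx : x ≠ 0) :
    ∃ φ : N →ₗ[R] E, φ x ≠ 0 := by
  obtain ⟨φ, hφ⟩ := Module.Injective.exists_linearMap_apply_eq (x := x) fun r hr =>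
    hann r fun hu => hx (by simpa [smul_smul] using congrArg ((↑hu.unit⁻¹ : R) • ·) hr)
  exact ⟨φ, hφ ▸ he⟩

end Separation

section FractionFieldModInteger

variable {A : Type u} {K : Type v} [CommRing A] [Field K] [Algebra A K] [IsFractionRing A K]

theorem smul_surjective_quotient_range_algebraMap {c : A} (hc : c ≠ 0) :
    Function.Surjective (c • · : K ⧸ LinearMap.range (Algebra.linearMap A K) → _) := by
  have hcK : algebraMap A K c ≠ 0 := IsFractionRing.to_map_eq_zero_iff.not.2 hc
  rintro ⟨q⟩
  refine ⟨Submodule.Quotient.mk ((algebraMap A K c)⁻¹ * q), ?_⟩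
  change Submodule.Quotient.mk (c • _) = Submodule.Quotient.mk q
  rw [Algebra.smul_def, ← mul_assoc, mul_inv_cancel₀ hcK, one_mul]

variable [IsDomain A] [IsDiscreteValuationRing A]

theorem IsDiscreteValuationRing.injective_quotient_range_algebraMap :
    Module.Injective A (K ⧸ LinearMap.range (Algebra.linearMap A K)) :=
  (Module.Baer.of_smul_surjective fun _ => smul_surjective_quotient_range_algebraMap).injective

/-- The class of `ϖ⁻¹`, for a uniformizer `ϖ`, spans the socle of `K ⧸ A`. -/
theorem IsDiscreteValuationRing.exists_ne_zero_maximalIdeal_smul_eq_zero :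
    ∃ e : K ⧸ LinearMap.range (Algebra.linearMap A K), e ≠ 0 ∧
      ∀ r ∈ IsLocalRing.maximalIdeal A, r • e = 0 := by
  obtain ⟨ϖ, hϖ⟩ := IsDiscreteValuationRing.exists_irreducible A
  have hϖK : algebraMap A K ϖ ≠ 0 := IsFractionRing.to_map_eq_zero_iff.not.2 hϖ.ne_zero
  refine ⟨Submodule.Quotient.mk (algebraMap A K ϖ)⁻¹, fun h => ?_, fun r hr => ?_⟩
  · obtain ⟨y, hy⟩ := (Submodule.Quotient.mk_eq_zero _).1 h
    refine hϖ.not_isUnit (IsUnit.of_mul_eq_one y (IsFractionRing.injective A K ?_))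
    simp only [Algebra.linearMap_apply] at hy
    rw [map_mul, hy, mul_inv_cancel₀ hϖK, map_one]
  · rw [(IsDiscreteValuationRing.irreducible_iff_uniformizer ϖ).1 hϖ] at hr
    obtain ⟨t, rfl⟩ := Ideal.mem_span_singleton'.1 hr
    rw [← Submodule.Quotient.mk_smul, Submodule.Quotient.mk_eq_zero]
    refine ⟨t, ?_⟩
    rw [Algebra.linearMap_apply, Algebra.smul_def, map_mul, mul_assoc, mul_inv_cancel₀ hϖK,
      mul_one]

theorem IsDiscreteValuationRing.exists_linearMap_quotient_range_apply_ne_zero [Small.{v} A]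
    {N : Type*} [AddCommGroup N] [Module A N] {x : N} (hx : x ≠ 0) :
    ∃ φ : N →ₗ[A] K ⧸ LinearMap.range (Algebra.linearMap A K), φ x ≠ 0 :=
  have := injective_quotient_range_algebraMap (A := A) (K := K)
  have ⟨_, he0, he⟩ := exists_ne_zero_maximalIdeal_smul_eq_zero (A := A) (K := K)
  IsLocalRing.exists_linearMap_apply_ne_zero he0 he hx

end FractionFieldModInteger

section QuotientByLocalization

variable {R : Type u} [CommRing R] [IsDomain R]

section

variable (m : Ideal R) [hp : m.IsPrime] [IsDiscreteValuationRing (Localization.AtPrime m)]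

theorem Module.injective_qmodLocR : Module.Injective R (QmodLocR R m hp) :=
  Module.Baer.injective <|
    (Module.Baer.of_isLocalization m.primeCompl (Localization.AtPrime m)
      (.of_injective IsDiscreteValuationRing.injective_quotient_range_algebraMap)).of_equiv
      (Submodule.Quotient.restrictScalarsEquiv R _).symm

theorem exists_linearMap_qmodLocR_apply_ne_zero {N : Type*} [AddCommGroup N] [Module R N] {x : N}
    (hann : ∀ r : R, r • x = 0 → r ∈ m) :
    ∃ φ : N →ₗ[R] QmodLocR R m hp, φ x ≠ 0 := by
  have := Module.injective_qmodLocR m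
  obtain ⟨e, he0, he⟩ := IsDiscreteValuationRing.exists_ne_zero_maximalIdeal_smul_eq_zero
    (A := Localization.AtPrime m) (K := FractionRing R)
  let ε := (Submodule.Quotient.restrictScalarsEquiv R (locImageSubmodule R m)).symm
  have hann' : ∀ r : R, r • x = 0 → r • ε e = 0 := fun r hr => by
    rw [← map_smul, ← algebraMap_smul (Localization.AtPrime m),
      he _ ((IsLocalization.AtPrime.to_map_mem_maximal_iff _ m r).2 (hann r hr)), map_zero]
  obtain ⟨φ, hφ⟩ := Module.Injective.exists_linearMap_apply_eq hann'
  exact ⟨φ, hφ ▸ ε.map_ne_zero_iff.2 he0⟩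

end

theorem IsGVTorsionFree.exists_linearMap_pi_qmodLocR_ne_zero
    (hdvr : ∀ m : Ideal R, IsMaxWIdeal R m → ∀ [m.IsPrime],
      IsDiscreteValuationRing (Localization.AtPrime m))
    {A : Type*} [AddCommGroup A] [Module R A] (hA : IsGVTorsionFree R A) [Nontrivial A] :
    ∃ f : A →ₗ[R] ((m : WMaxPrimes R) → QmodLocR R m.1 m.2.2), f ≠ 0 := by
  classical
  obtain ⟨x, hx⟩ := exists_ne (0 : A)
  have hann_top : LinearMap.ker (LinearMap.toSpanSingleton R A x) ≠ ⊤ :=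
    (Ideal.ne_top_iff_one _).2 fun h => hx (by
      rwa [LinearMap.mem_ker, LinearMap.toSpanSingleton_apply, one_smul] at h)
  obtain ⟨m, hm, hannm⟩ := exists_isMaxWIdeal_le (hA.isWIdeal_ker_toSpanSingleton x) hann_top
  have hprime := hm.isPrime
  have := hdvr m hm
  obtain ⟨φ, hφ⟩ := exists_linearMap_qmodLocR_apply_ne_zero m (x := x) fun r hr => hannm hr
  let M := fun m : WMaxPrimes R => QmodLocR R m.1 m.2.2
  refine ⟨LinearMap.single R M ⟨m, hm, hprime⟩ ∘ₗ φ, fun h => hφ ?_⟩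
  exact (Pi.single_eq_zero_iff (M := M) (i := ⟨m, hm, hprime⟩)).1 (LinearMap.congr_fun h x)

end QuotientByLocalization

/-- Let `R` be a domain with quotient field `Q`.
(a) If `m` is a maximal w-ideal with `R_m` a DVR, then `Q/R_m` is a faithfully
injective `R_m`-module, and for every nonzero ideal `I` of `R` the Matlis evaluation
map `θ : R_m/I_m → Hom(Hom(R_m/I_m, Q/R_m), Q/R_m)` is injective.
(b) If `R_m` is a DVR for every maximal w-ideal `m`, then
`E^(w) = ∏_{m ∈ w-Max(R)} Q/R_m` is a w-universal injective `R`-module. -/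
theorem dvr_localizations_give_wUniversal_injective (R : Type u) [CommRing R]
    [IsDomain R] :
    (∀ (m : Ideal R), IsMaxWIdeal R m → ∀ [hp : m.IsPrime],
      IsDiscreteValuationRing (Localization.AtPrime m) →
        ((Module.Injective (Localization.AtPrime m)
            ((FractionRing R) ⧸ locImageSubmodule R m) ∧
          ∀ (N : Type u) [AddCommGroup N] [Module (Localization.AtPrime m) N],
            Nontrivial N →
              ∃ f : N →ₗ[Localization.AtPrime m]
                  ((FractionRing R) ⧸ locImageSubmodule R m), f ≠ 0) ∧
          ∀ I : Ideal R, I ≠ ⊥ →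
            Function.Injective
              (fun (a : (Localization.AtPrime m) ⧸
                    I.map (algebraMap R (Localization.AtPrime m))) =>
                fun (φ : ((Localization.AtPrime m) ⧸
                      I.map (algebraMap R (Localization.AtPrime m)))
                    →ₗ[Localization.AtPrime m]
                      ((FractionRing R) ⧸ locImageSubmodule R m)) => φ a))) ∧
    ((∀ (m : Ideal R), IsMaxWIdeal R m → ∀ [hp : m.IsPrime],
        IsDiscreteValuationRing (Localization.AtPrime m)) →
      Module.Injective R ((m : WMaxPrimes R) → QmodLocR R m.1 m.2.2) ∧
        ∀ (A : Type u) [AddCommGroup A] [Module R A], IsGVTorsionFree R A →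
          Nontrivial A →
            ∃ f : A →ₗ[R] ((m : WMaxPrimes R) → QmodLocR R m.1 m.2.2), f ≠ 0) := by
  refine ⟨fun m _ _ _ =>
    ⟨⟨?_, fun N _ _ _ => ?_⟩, fun I _ a b hab => by_contra fun hne => ?_⟩,
    fun hdvr => ⟨?_, fun A _ _ hA _ => hA.exists_linearMap_pi_qmodLocR_ne_zero hdvr⟩⟩
  · exact IsDiscreteValuationRing.injective_quotient_range_algebraMap
  · obtain ⟨x, hx⟩ := exists_ne (0 : N)
    obtain ⟨φ, hφ⟩ := IsDiscreteValuationRing.exists_linearMap_quotient_range_apply_ne_zero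
      (A := Localization.AtPrime m) (K := FractionRing R) hx
    exact ⟨φ, fun h => hφ (h ▸ rfl)⟩
  · obtain ⟨φ, hφ⟩ := IsDiscreteValuationRing.exists_linearMap_quotient_range_apply_ne_zero
      (A := Localization.AtPrime m) (K := FractionRing R) (sub_ne_zero.2 hne)
    exact hφ (by rw [map_sub]; exact sub_eq_zero.2 (congrFun hab φ))
  · have (m : WMaxPrimes R) : Module.Injective R (QmodLocR R m.1 m.2.2) :=
      have := m.2.2
      have := hdvr m.1 m.2.1
      Module.injective_qmodLocR m.1
    infer_instance
end
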